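/- Let f ∈ E_{(beta,mu)} with beta > 0 and mu > 1. Then the inverse Fourier transform F^{-1}(f)(x) = (2π)^{−1/2} ∫_ℝ f(m) e^{ixm} dm, defined for x ∈ ℝ, extends to a holomorphic function on the horizontal strip H_beta = {z ∈ ℂ : |Im(z)| < beta}. Moreover, if phi(m) = i·m·f(m), then phi ∈ E_{(beta,mu−1)} and the derivative of the extension satisfies ∂_z F^{-1}(f)(z) = F^{-1}(phi)(z) for all z ∈ H_beta. -/

import Mathlib

/- Statement 8: inverse Fourier transform on the spaces E_{(beta,mu)}. -/

open MeasureTheory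

noncomputable def eW (beta mu m : ℝ) : ℝ := (1 + |m|) ^ mu * Real.exp (beta * |m|)

/-- The inverse Fourier transform, extended to complex arguments. -/
noncomputable def invFourier (f : ℝ → ℂ) (z : ℂ) : ℂ :=
  (1 / Real.sqrt (2 * Real.pi) : ℝ) • ∫ m : ℝ, f m * Complex.exp (Complex.I * z * m)

/-- The horizontal strip `H_beta`. -/
def hStrip (beta : ℝ) : Set ℂ := {z : ℂ | |z.im| < beta}

/-! Differentiation under the integral sign. On a substrip `|Im z| ≤ b < β` we have
`|e^{izm}| = e^{-m Im z} ≤ e^{b|m|}`, so the weight `e^{β|m|}` dominates both the integrand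
`f(m) e^{izm}` and its `z`-derivative `i m f(m) e^{izm}` by `B e^{-(β-b)|m|}`; the extra factor `m`
is absorbed by the polynomial weight `(1+|m|)^μ`, since `μ ≥ 1`. -/

open Filter

lemma integrable_exp_neg_mul_abs {δ : ℝ} (hδ : 0 < δ) :
    Integrable (fun m : ℝ => Real.exp (-δ * |m|)) := by
  have hO : (fun m : ℝ => Real.exp (-δ * |m|)) =O[atTop] fun m => Real.exp (-δ * m) :=
    (Asymptotics.isBigO_refl _ _).congr'
      (eventually_ge_atTop 0 |>.mono fun m hm => by simp [abs_of_nonneg hm]) EventuallyEq.rfl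
  exact (by fun_prop : Continuous fun m : ℝ => Real.exp (-δ * |m|)).locallyIntegrable
    |>.integrable_of_isBigO_atTop_of_norm_isNegInvariant (by simp [Function.comp_def]) hO
      ⟨Set.Ioi 0, Ioi_mem_atTop 0, exp_neg_integrableOn_Ioi 0 hδ⟩

lemma norm_cexp_I_mul_mul_ofReal (z : ℂ) (m : ℝ) :
    ‖Complex.exp (Complex.I * z * m)‖ = Real.exp (-z.im * m) := by
  simp [Complex.norm_exp, Complex.mul_re]

lemma norm_mul_cexp_I_mul_le {g : ℝ → ℂ} {β B b : ℝ}
    (hg : ∀ m, Real.exp (β * |m|) * ‖g m‖ ≤ B) {z : ℂ} (hz : |z.im| ≤ b) (m : ℝ) :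
    ‖g m * Complex.exp (Complex.I * z * m)‖ ≤ B * Real.exp (-(β - b) * |m|) := by
  have him : -z.im * m ≤ b * |m| :=
    calc -z.im * m ≤ |z.im| * |m| := by rw [← abs_mul]; exact neg_mul z.im m ▸ neg_le_abs _
      _ ≤ b * |m| := by gcongr
  rw [norm_mul, norm_cexp_I_mul_mul_ofReal]
  calc ‖g m‖ * Real.exp (-z.im * m)
      ≤ ‖g m‖ * Real.exp (b * |m|) := by gcongr
    _ = Real.exp (β * |m|) * ‖g m‖ * Real.exp (-(β - b) * |m|) := by
      rw [mul_right_comm, ← Real.exp_add]; ring_nf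
    _ ≤ B * Real.exp (-(β - b) * |m|) := by gcongr; exact hg m

lemma hasDerivAt_mul_cexp_I_mul (c : ℂ) (m : ℝ) (z : ℂ) :
    HasDerivAt (fun z => c * Complex.exp (Complex.I * z * m))
      (Complex.I * m * c * Complex.exp (Complex.I * z * m)) z := by
  have hlin : HasDerivAt (fun z : ℂ => Complex.I * z * m) (Complex.I * m) z := by
    simpa using ((hasDerivAt_id z).const_mul Complex.I).mul_const (m : ℂ)
  rw [show Complex.I * m * c * Complex.exp (Complex.I * z * m)
      = c * (Complex.exp (Complex.I * z * m) * (Complex.I * m)) by ring]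
  exact hlin.cexp.const_mul c

lemma hasDerivAt_invFourier {g : ℝ → ℂ} {β B : ℝ} (hg : Continuous g)
    (hg₀ : ∀ m, Real.exp (β * |m|) * ‖g m‖ ≤ B)
    (hg₁ : ∀ m, Real.exp (β * |m|) * ‖Complex.I * m * g m‖ ≤ B)
    {z₀ : ℂ} (hz₀ : z₀ ∈ hStrip β) :
    HasDerivAt (invFourier g) (invFourier (fun m => Complex.I * m * g m) z₀) z₀ := by
  have hz₀β : |z₀.im| < β := hz₀
  obtain ⟨ε, hε, hεβ⟩ : ∃ ε : ℝ, 0 < ε ∧ |z₀.im| + ε < β :=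
    ⟨(β - |z₀.im|) / 2, by linarith, by linarith⟩
  have hδ : 0 < β - (|z₀.im| + ε) := by linarith
  have hball : ∀ z ∈ Metric.ball z₀ ε, |z.im| ≤ |z₀.im| + ε := fun z hz =>
    calc |z.im| ≤ |z₀.im| + |(z - z₀).im| := by
          rw [Complex.sub_im]; linarith [abs_sub_abs_le_abs_sub z.im z₀.im]
      _ ≤ |z₀.im| + ε := by
          gcongr; exact (Complex.abs_im_le_norm _).trans (mem_ball_iff_norm.1 hz).le
  have hbound := (integrable_exp_neg_mul_abs hδ).const_mul B
  have hmeas : ∀ (h : ℝ → ℂ) (z : ℂ), Continuous h →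
      AEStronglyMeasurable (fun m : ℝ => h m * Complex.exp (Complex.I * z * m)) :=
    fun h z hh => by fun_prop
  obtain ⟨-, h⟩ := hasDerivAt_integral_of_dominated_loc_of_deriv_le (Metric.ball_mem_nhds z₀ hε)
    (Eventually.of_forall fun z => hmeas g z hg)
    (hbound.mono' (hmeas g z₀ hg)
      (Eventually.of_forall (norm_mul_cexp_I_mul_le hg₀ (by linarith))))
    (hmeas _ z₀ (by fun_prop))
    (Eventually.of_forall fun m z hz => norm_mul_cexp_I_mul_le hg₁ (hball z hz) m) hbound
    (Eventually.of_forall fun m z _ => hasDerivAt_mul_cexp_I_mul (g m) m z)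
  unfold invFourier
  exact h.const_smul (1 / Real.sqrt (2 * Real.pi) : ℝ)

lemma exp_mul_norm_le_of_eW_mul_norm_le {g : ℝ → ℂ} {β μ B : ℝ} (hμ : 0 ≤ μ)
    (hg : ∀ m, eW β μ m * ‖g m‖ ≤ B) (m : ℝ) : Real.exp (β * |m|) * ‖g m‖ ≤ B := by
  refine le_trans ?_ (hg m)
  gcongr
  exact le_mul_of_one_le_left (Real.exp_pos _).le
    (Real.one_le_rpow (by linarith [abs_nonneg m]) hμ)

lemma eW_sub_one_mul_norm_I_mul_le (β μ : ℝ) (g : ℝ → ℂ) (m : ℝ) :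
    eW β (μ - 1) m * ‖Complex.I * m * g m‖ ≤ eW β μ m * ‖g m‖ := by
  have hpos : 0 < 1 + |m| := by positivity
  have hsplit : eW β μ m = eW β (μ - 1) m * (1 + |m|) := by
    rw [eW, eW, Real.rpow_sub hpos, Real.rpow_one]; field_simp
  rw [hsplit, norm_mul, norm_mul, Complex.norm_I, Complex.norm_real, Real.norm_eq_abs, one_mul,
    ← mul_assoc]
  gcongr
  · exact (mul_pos (Real.rpow_pos_of_pos hpos _) (Real.exp_pos _)).le
  · linarith

theorem stmt_8_general (beta mu : ℝ) (hmu : 1 < mu)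
    (f : ℝ → ℂ) (hf : Continuous f)
    (B : ℝ) (hB : ∀ m : ℝ, eW beta mu m * ‖f m‖ ≤ B) :
    DifferentiableOn ℂ (invFourier f) (hStrip beta) ∧
    Continuous (fun m : ℝ => Complex.I * m * f m) ∧
    (∃ B' : ℝ, ∀ m : ℝ, eW beta (mu - 1) m * ‖Complex.I * m * f m‖ ≤ B') ∧
    ∀ z ∈ hStrip beta,
      deriv (invFourier f) z = invFourier (fun m => Complex.I * m * f m) z := by
  have hφ : ∀ m : ℝ, eW beta (mu - 1) m * ‖Complex.I * m * f m‖ ≤ B :=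
    fun m => (eW_sub_one_mul_norm_I_mul_le beta mu f m).trans (hB m)
  have hderiv : ∀ z ∈ hStrip beta,
      HasDerivAt (invFourier f) (invFourier (fun m => Complex.I * m * f m) z) z :=
    fun z hz => hasDerivAt_invFourier hf (exp_mul_norm_le_of_eW_mul_norm_le (by linarith) hB)
      (exp_mul_norm_le_of_eW_mul_norm_le (by linarith) hφ) hz
  exact ⟨fun z hz => (hderiv z hz).differentiableAt.differentiableWithinAt, by fun_prop, ⟨B, hφ⟩,
    fun z hz => (hderiv z hz).deriv⟩

theorem stmt_8 (beta mu : ℝ) (hbeta : 0 < beta) (hmu : 1 < mu)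
    (f : ℝ → ℂ) (hf : Continuous f)
    (B : ℝ) (hB : ∀ m : ℝ, eW beta mu m * ‖f m‖ ≤ B) :
    DifferentiableOn ℂ (invFourier f) (hStrip beta) ∧
    Continuous (fun m : ℝ => Complex.I * m * f m) ∧
    (∃ B' : ℝ, ∀ m : ℝ, eW beta (mu - 1) m * ‖Complex.I * m * f m‖ ≤ B') ∧
    ∀ z ∈ hStrip beta,
      deriv (invFourier f) z = invFourier (fun m => Complex.I * m * f m) z :=
  stmt_8_general beta mu hmu f hf B hB
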